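/- For an arbitrary graph E, the embedding F : G(E) → P_λ constructed from injections of vertices and edges into the generators is a topological embedding of (G(E), τ_{F_ω}) into (P_λ, τ_{F_ω}), where λ = |G(E)|; in particular F(U_n(0)) = F(G(E)) ∩ V_{n+1}(0), where U_n(0) = {u v^{-1} ∈ G(E) : min{|u|,|v|} > n} ∪ {0} and V_{n+1}(0) = {u v^{-1} ∈ P_λ : min{|u|,|v|} > n+1} ∪ {0}. -/

import Mathlib

universe u

/-- A directed graph. -/
structure DiGraph : Type (u + 1) where
  V : Type u
  E : Type u
  s : E → V
  r : E → V

namespace DiGraph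

variable (G : DiGraph.{u})

/-- A list of edges forms a valid path starting at vertex `v`. -/
def Valid (v : G.V) : List G.E → Prop
  | [] => True
  | e :: l => G.s e = v ∧ Valid (G.r e) l

/-- the endpoint of a list of edges starting at `v`. -/
def dst (v : G.V) : List G.E → G.V
  | [] => v
  | e :: l => dst (G.r e) l

variable {G}

lemma dst_append (v : G.V) (l₁ l₂ : List G.E) :
    G.dst v (l₁ ++ l₂) = G.dst (G.dst v l₁) l₂ := by
  induction l₁ generalizing v with
  | nil => rfl
  | cons e t ih => simp [dst, ih]

lemma valid_append (v : G.V) (l₁ l₂ : List G.E) :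
    G.Valid v (l₁ ++ l₂) ↔ G.Valid v l₁ ∧ G.Valid (G.dst v l₁) l₂ := by
  induction l₁ generalizing v with
  | nil => simp [Valid, dst]
  | cons e t ih => simp [Valid, dst, ih, and_assoc]

variable (G) in
/-- A (finite, directed) path in `G`: a source vertex together with a
composable list of edges.  Paths of length zero are the vertices. -/
structure GPath : Type u where
  src : G.V
  edges : List G.E
  valid : G.Valid src edges

/-- The range (end vertex) of a path. -/
def GPath.rng (p : G.GPath) : G.V := G.dst p.src p.edges

/-- Concatenation of composable paths. -/
def GPath.comp (p q : G.GPath) (h : p.rng = q.src) : G.GPath :=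
  ⟨p.src, p.edges ++ q.edges, by
    rw [valid_append]
    exact ⟨p.valid, by rw [show G.dst p.src p.edges = q.src from h]; exact q.valid⟩⟩

lemma GPath.comp_rng (p q : G.GPath) (h : p.rng = q.src) : (p.comp q h).rng = q.rng := by
  show G.dst p.src (p.edges ++ q.edges) = _
  rw [dst_append, show G.dst p.src p.edges = q.src from h]; rfl

/-- If `p` is a prefix of the path `q`, the remaining path (so that
`q = p.comp (p.strip q _ _)`). -/
def GPath.strip (p q : G.GPath) (hs : p.src = q.src) (hp : p.edges <+: q.edges) : G.GPath :=
  ⟨p.rng, q.edges.drop p.edges.length, by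
    obtain ⟨t, ht⟩ := hp
    have h1 : p.edges ++ q.edges.drop p.edges.length = q.edges := by
      rw [← ht, List.drop_left]
    have h2 : G.Valid p.src (p.edges ++ q.edges.drop p.edges.length) := by
      rw [h1, hs]; exact q.valid
    exact ((valid_append _ _ _).mp h2).2⟩

lemma GPath.strip_rng (p q : G.GPath) (hs : p.src = q.src) (hp : p.edges <+: q.edges) :
    (p.strip q hs hp).rng = q.rng := by
  show G.dst p.rng (q.edges.drop p.edges.length) = G.dst q.src q.edges
  obtain ⟨t, ht⟩ := hp
  have h1 : p.edges ++ q.edges.drop p.edges.length = q.edges := by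
    rw [← ht, List.drop_left]
  conv_rhs => rw [← hs, ← h1]
  rw [dst_append]; rfl

variable (G) in
/-- A nonzero element `a b⁻¹` of the graph inverse semigroup: a pair of
paths with the same range. -/
structure NZ : Type u where
  a : G.GPath
  b : G.GPath
  h : a.rng = b.rng

/-- The graph inverse semigroup `G(E)` over a directed graph, in normal form:
the elements `a b⁻¹` with `r(a) = r(b)`, together with a zero element. -/
def GIS (G : DiGraph.{u}) : Type u := Option (NZ G)

instance : Zero (GIS G) := ⟨none⟩

open scoped Classical in
/-- The multiplication of the graph inverse semigroup:
`a b⁻¹ · c d⁻¹ = a c₁ d⁻¹` if `c = b c₁`, `a (d b₁)⁻¹` if `b = c b₁`, and `0` otherwise. -/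
noncomputable instance : Mul (GIS G) :=
  ⟨fun x y =>
    match x, y with
    | none, _ => none
    | some _, none => none
    | some ⟨a, b, hab⟩, some ⟨c, d, hcd⟩ =>
      if h : b.src = c.src ∧ b.edges <+: c.edges then
        some ⟨a.comp (b.strip c h.1 h.2) hab, d, by
          exact (GPath.comp_rng _ _ _).trans ((GPath.strip_rng _ _ _ _).trans hcd)⟩
      else if h' : c.src = b.src ∧ c.edges <+: b.edges then
        some ⟨a, d.comp (c.strip b h'.1 h'.2) hcd.symm, by
          exact hab.trans ((GPath.strip_rng _ _ _ _).symm.trans (GPath.comp_rng _ _ _).symm)⟩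
      else none⟩

/-- The nonzero element `a b⁻¹` of `G(E)` determined by a pair of paths
with the same range. -/
def GIS.nz (n : NZ G) : GIS G := some n

/-- The inversion of the graph inverse semigroup: `(u v⁻¹)⁻¹ = v u⁻¹`. -/
def GIS.inv : GIS G → GIS G
  | none => none
  | some ⟨a, b, h⟩ => some ⟨b, a, h.symm⟩

end DiGraph
namespace DiGraph

/-- The graph with one vertex and a loop for each element of `ι`. -/
def bouquet (ι : Type u) : DiGraph.{u} :=
  ⟨PUnit, ι, fun _ => PUnit.unit, fun _ => PUnit.unit⟩

/-- The polycyclic monoid `P_ι` on a set `ι` of generators, realized as the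
graph inverse semigroup over the graph with one vertex and `ι` many loops. -/
def PolyM (ι : Type u) : Type u := GIS (bouquet ι)

noncomputable instance (ι : Type u) : Mul (PolyM ι) :=
  inferInstanceAs (Mul (GIS (bouquet ι)))

instance (ι : Type u) : Zero (PolyM ι) := inferInstanceAs (Zero (GIS (bouquet ι)))

end DiGraph
namespace DiGraph

variable {G : DiGraph.{u}}

/-- membership predicate for the basic neighbourhoods of zero: all of
`a b⁻¹` with `a, b ∈ F`, together with `0`. -/
def inUF (F : Set G.GPath) : GIS G → Prop
  | none => True
  | some n => n.a ∈ F ∧ n.b ∈ F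

/-- The basic neighbourhood `U_F(0) = {a b⁻¹ : a, b ∈ F} ∪ {0}` of zero. -/
def UF (F : Set G.GPath) : Set (GIS G) := {x | inUF F x}

lemma inUF_mono {F₁ F₂ : Set G.GPath} (h : F₁ ⊆ F₂) :
    ∀ x : GIS G, inUF F₁ x → inUF F₂ x := by
  intro x hx
  cases x with
  | none => trivial
  | some n => exact ⟨h hx.1, h hx.2⟩

/-- The topology `τ_𝓕` on `G(E)` determined by a filter `𝓕` on `Path(E)`:
every nonzero element is isolated, and the sets `U_F(0)`, `F ∈ 𝓕`, form a
neighbourhood base at `0`. -/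
def tauF (𝓕 : Filter G.GPath) : TopologicalSpace (GIS G) where
  IsOpen U := (0 : GIS G) ∈ U → ∃ F ∈ 𝓕, UF F ⊆ U
  isOpen_univ := fun _ => ⟨Set.univ, Filter.univ_mem, Set.subset_univ _⟩
  isOpen_inter := fun U V hU hV h0 => by
    obtain ⟨F₁, hF₁, hs₁⟩ := hU h0.1
    obtain ⟨F₂, hF₂, hs₂⟩ := hV h0.2
    exact ⟨F₁ ∩ F₂, Filter.inter_mem hF₁ hF₂, fun x hx =>
      ⟨hs₁ (inUF_mono Set.inter_subset_left x hx),
       hs₂ (inUF_mono Set.inter_subset_right x hx)⟩⟩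
  isOpen_sUnion := fun S hS h0 => by
    obtain ⟨U, hU, h0U⟩ := h0
    obtain ⟨F, hF, hs⟩ := hS U hU h0U
    exact ⟨F, hF, hs.trans (Set.subset_sUnion_of_mem hU)⟩

/-- The prefix partial order on paths: `a ≤ b` iff `b` is a prefix of `a`. -/
def prefLE (a b : G.GPath) : Prop := b.src = a.src ∧ b.edges <+: a.edges

/-- An ideal of `(Path(E), ≤)`: a set `A` with `↓A = A`. -/
def IsIdeal (A : Set G.GPath) : Prop :=
  ∀ a b : G.GPath, prefLE a b → b ∈ A → a ∈ A

/-- A topological filter on `Path(E)`: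
(i) for `F ∈ 𝓕` and paths `a, b` with `r(a) = r(b)`, the set
`F \ {bk : k ∈ Path(E), ak ∉ F}` belongs to `𝓕`;
(ii) `𝓕` contains all cofinite subsets of `Path(E)`;
(iii) `𝓕` has a base consisting of ideals of `(Path(E), ≤)`. -/
def IsTopFilter (𝓕 : Filter G.GPath) : Prop :=
  (∀ F ∈ 𝓕, ∀ a b : G.GPath, a.rng = b.rng →
      F \ {p | ∃ (k : G.GPath) (h1 : b.rng = k.src) (h2 : a.rng = k.src),
        p = b.comp k h1 ∧ a.comp k h2 ∉ F} ∈ 𝓕) ∧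
  𝓕 ≤ Filter.cofinite ∧
  (∀ F ∈ 𝓕, ∃ I ∈ 𝓕, I ⊆ F ∧ IsIdeal I)

variable (G) in
/-- The filter `𝓕_ω` generated by the sets `U_n = {u ∈ Path(E) : |u| > n}`. -/
def Fomega : Filter G.GPath :=
  Filter.generate {S | ∃ n : ℕ, S = {u : G.GPath | n < u.edges.length}}

variable (G) in
/-- `U_n(0) = {u v⁻¹ : min{|u|,|v|} > n} ∪ {0}`. -/
def Un (n : ℕ) : Set (GIS G) := UF {u : G.GPath | n < u.edges.length}

end DiGraph

/-! The paper's `F` sends a path `u = e₁ ⋯ eₙ` to the word `g(s u) h(e₁) ⋯ h(eₙ)` of length `|u| + 1`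
(in `F(u) F(v)⁻¹` the trailing letters `g(r u)⁻¹ g(r v)` cancel, as `r u = r v`). Injectivity of `g`
and `h` makes this word map preserve and reflect the prefix order, which is all the multiplication of
a graph inverse semigroup looks at; so `F` is an injective homomorphism. Since lengths shift by one,
`F⁻¹(V_{n+1}(0)) = U_n(0)`. In both topologies every nonzero point is isolated and these sets form a
neighbourhood base at `0`, so `F` is a topological embedding. The injections `g`, `h` into `λ`
exist because `v ↦ v v⁻¹` and `e ↦ e r(e)⁻¹` inject `E⁰ ⊔ E¹` into `G(E)`. -/

universe v

namespace DiGraph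

attribute [ext] GPath NZ

open Function Filter Topology

variable {G : DiGraph.{u}}

open scoped Classical in
lemma GIS.nz_mul_nz {a b c d : G.GPath} (hab : a.rng = b.rng) (hcd : c.rng = d.rng) :
    GIS.nz ⟨a, b, hab⟩ * GIS.nz ⟨c, d, hcd⟩ =
      if hbc : b.src = c.src ∧ b.edges <+: c.edges then
        GIS.nz ⟨a.comp (b.strip c hbc.1 hbc.2) hab, d,
          (GPath.comp_rng _ _ _).trans ((GPath.strip_rng _ _ _ _).trans hcd)⟩
      else if hcb : c.src = b.src ∧ c.edges <+: b.edges then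
        GIS.nz ⟨a, d.comp (c.strip b hcb.1 hcb.2) hcd.symm,
          hab.trans ((GPath.strip_rng _ _ _ _).symm.trans (GPath.comp_rng _ _ _).symm)⟩
      else 0 :=
  rfl

lemma UF_mono {F₁ F₂ : Set G.GPath} (h : F₁ ⊆ F₂) : UF F₁ ⊆ UF F₂ :=
  inUF_mono h

lemma Un_succ_subset (n : ℕ) : Un G (n + 1) ⊆ Un G n :=
  UF_mono fun _ hu => Nat.lt_of_succ_lt hu

section Topology

variable {𝓕 : Filter G.GPath}

lemma isOpen_tauF_UF {F : Set G.GPath} (hF : F ∈ 𝓕) : IsOpen[tauF 𝓕] (UF F) :=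
  fun _ => ⟨F, hF, subset_rfl⟩

lemma nhds_tauF_of_ne_zero {x : GIS G} (hx : x ≠ 0) : @nhds _ (tauF 𝓕) x = pure x :=
  let _ := tauF 𝓕
  (isOpen_singleton_iff_nhds_eq_pure x).mp fun h0 => absurd h0.symm hx

lemma hasBasis_nhds_zero_tauF {ι : Sort*} {p : ι → Prop} {s : ι → Set G.GPath}
    (h𝓕 : 𝓕.HasBasis p s) : (@nhds _ (tauF 𝓕) 0).HasBasis p (fun i => UF (s i)) := by
  let _ := tauF 𝓕
  refine ⟨fun t => ⟨fun ht => ?_, fun ⟨i, hi, hst⟩ => ?_⟩⟩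
  · obtain ⟨U, hUt, hU, h0⟩ := mem_nhds_iff.mp ht
    obtain ⟨F, hF, hFU⟩ := hU h0
    obtain ⟨i, hi, hsF⟩ := h𝓕.mem_iff.mp hF
    exact ⟨i, hi, (UF_mono hsF).trans (hFU.trans hUt)⟩
  · exact mem_of_superset ((isOpen_tauF_UF (h𝓕.mem_of_mem hi)).mem_nhds trivial) hst

lemma isEmbedding_tauF_of_nhds_zero {H : DiGraph.{v}} {𝓖 : Filter H.GPath} {f : GIS G → GIS H}
    (hf : Injective f) (hf0 : f 0 = 0)
    (hnhds : @nhds _ (tauF 𝓕) 0 = comap f (@nhds _ (tauF 𝓖) 0)) :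
    @IsEmbedding _ _ (tauF 𝓕) (tauF 𝓖) f := by
  let _ := tauF 𝓕; let _ := tauF 𝓖
  refine ⟨isInducing_iff_nhds.mpr fun x => ?_, hf⟩
  rcases eq_or_ne x 0 with rfl | hx
  · rwa [hf0]
  · rw [nhds_tauF_of_ne_zero hx, nhds_tauF_of_ne_zero (hf0 ▸ hf.ne hx), ← map_pure,
      comap_map hf]

end Topology

lemma hasBasis_Fomega :
    (Fomega G).HasBasis (fun _ => True) fun n : ℕ => {u : G.GPath | n < u.edges.length} := by
  have hgen : {S | ∃ n : ℕ, S = {u : G.GPath | n < u.edges.length}} =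
      Set.range fun n : ℕ => {u : G.GPath | n < u.edges.length} := by
    ext; simp [eq_comm]
  rw [Fomega, hgen, generate_eq_biInf, iInf_range]
  exact hasBasis_iInf_principal (Antitone.directed_ge fun _ _ hmn _ hu => lt_of_le_of_lt hmn hu)

lemma hasBasis_nhds_zero_tauF_Fomega :
    (@nhds _ (tauF (Fomega G)) 0).HasBasis (fun _ => True) (Un G) :=
  hasBasis_nhds_zero_tauF hasBasis_Fomega

section Embedding

variable {ι : Type u} (g : G.V → ι) (h : G.E → ι)

instance : Subsingleton (bouquet ι).V := inferInstanceAs (Subsingleton PUnit)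

lemma bouquet_valid (v : (bouquet ι).V) (l : List ι) : (bouquet ι).Valid v l := by
  induction l generalizing v with
  | nil => trivial
  | cons e t ih => exact ⟨Subsingleton.elim _ _, ih _⟩

def GPath.toBouquet (p : G.GPath) : (bouquet ι).GPath :=
  ⟨PUnit.unit, g p.src :: p.edges.map h, bouquet_valid _ _⟩

def NZ.toBouquet (x : NZ G) : NZ (bouquet ι) :=
  ⟨x.a.toBouquet g h, x.b.toBouquet g h, Subsingleton.elim _ _⟩

def GIS.toPolyM : GIS G → PolyM ι :=
  Option.map (NZ.toBouquet g h)

variable {g h}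

lemma GPath.toBouquet_injective (hg : Injective g) (hh : Injective h) :
    Injective (GPath.toBouquet (G := G) g h) := fun _ _ hpq => by
  obtain ⟨hsrc, hedges⟩ := List.cons_eq_cons.mp (congrArg GPath.edges hpq)
  exact GPath.ext (hg hsrc) (List.map_injective_iff.mpr hh hedges)

lemma GPath.toBouquet_prefix_iff (hg : Injective g) (hh : Injective h) (p q : G.GPath) :
    ((p.toBouquet g h).src = (q.toBouquet g h).src ∧
        (p.toBouquet g h).edges <+: (q.toBouquet g h).edges) ↔
      (p.src = q.src ∧ p.edges <+: q.edges) := by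
  show _ ∧ (g p.src :: p.edges.map h : List ι) <+: g q.src :: q.edges.map h ↔ _
  rw [List.cons_prefix_cons, List.prefix_map_iff_of_injective hh, hg.eq_iff]
  exact and_iff_right rfl

lemma GPath.toBouquet_comp_strip {a b c : G.GPath} (hab : a.rng = b.rng)
    (hbc : b.src = c.src ∧ b.edges <+: c.edges)
    (hbc' : (b.toBouquet g h).src = (c.toBouquet g h).src ∧
      (b.toBouquet g h).edges <+: (c.toBouquet g h).edges) :
    (a.comp (b.strip c hbc.1 hbc.2) hab).toBouquet g h =
      (a.toBouquet g h).comp ((b.toBouquet g h).strip (c.toBouquet g h) hbc'.1 hbc'.2)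
        (Subsingleton.elim _ _) := by
  refine GPath.ext (Subsingleton.elim _ _) ?_
  show g a.src :: (a.edges ++ c.edges.drop b.edges.length).map h =
    (g a.src :: a.edges.map h) ++ (g c.src :: c.edges.map h).drop (b.edges.map h).length.succ
  simp [List.map_drop]

lemma GIS.toPolyM_mul (hg : Injective g) (hh : Injective h) (x y : GIS G) :
    toPolyM g h (x * y) = toPolyM g h x * toPolyM g h y := by
  rcases x with _ | ⟨a, b, hab⟩
  · rfl
  rcases y with _ | ⟨c, d, hcd⟩
  · rfl
  change toPolyM g h (GIS.nz _ * GIS.nz _) =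
    GIS.nz ⟨a.toBouquet g h, b.toBouquet g h, _⟩ * GIS.nz ⟨c.toBouquet g h, d.toBouquet g h, _⟩
  rw [GIS.nz_mul_nz, GIS.nz_mul_nz]
  by_cases hbc : b.src = c.src ∧ b.edges <+: c.edges
  · have hbc' := (GPath.toBouquet_prefix_iff hg hh b c).mpr hbc
    rw [dif_pos hbc, dif_pos hbc']
    exact congrArg some (NZ.ext (GPath.toBouquet_comp_strip hab hbc hbc') rfl)
  rw [dif_neg hbc, dif_neg (mt (GPath.toBouquet_prefix_iff hg hh b c).mp hbc)]
  by_cases hcb : c.src = b.src ∧ c.edges <+: b.edges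
  · have hcb' := (GPath.toBouquet_prefix_iff hg hh c b).mpr hcb
    rw [dif_pos hcb, dif_pos hcb']
    exact congrArg some (NZ.ext rfl (GPath.toBouquet_comp_strip hcd.symm hcb hcb'))
  rw [dif_neg hcb, dif_neg (mt (GPath.toBouquet_prefix_iff hg hh c b).mp hcb)]
  rfl

lemma GIS.toPolyM_injective (hg : Injective g) (hh : Injective h) :
    Injective (toPolyM (G := G) g h) :=
  Option.map_injective fun _ _ hxy =>
    NZ.ext (GPath.toBouquet_injective hg hh (congrArg NZ.a hxy))
      (GPath.toBouquet_injective hg hh (congrArg NZ.b hxy))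

lemma GIS.toPolyM_preimage_Un (n : ℕ) :
    toPolyM g h ⁻¹' Un (bouquet ι) (n + 1) = Un G n := by
  ext (_ | x)
  · exact iff_of_true trivial trivial
  · show n + 1 < (x.a.edges.map h).length + 1 ∧ n + 1 < (x.b.edges.map h).length + 1 ↔
      n < x.a.edges.length ∧ n < x.b.edges.length
    simp only [List.length_map, Nat.add_lt_add_iff_right]

lemma GIS.toPolyM_image_Un (n : ℕ) :
    toPolyM g h '' Un G n = Set.range (toPolyM g h) ∩ Un (bouquet ι) (n + 1) := by
  rw [← toPolyM_preimage_Un (g := g) (h := h)]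
  exact Set.image_preimage_eq_range_inter

lemma GIS.isEmbedding_toPolyM (hg : Injective g) (hh : Injective h) :
    @IsEmbedding _ _ (tauF (Fomega G)) (tauF (Fomega (bouquet ι))) (toPolyM g h) := by
  refine isEmbedding_tauF_of_nhds_zero (toPolyM_injective hg hh) rfl
    (hasBasis_nhds_zero_tauF_Fomega.ext (hasBasis_nhds_zero_tauF_Fomega.comap _)
      (fun n _ => ⟨n + 1, trivial, (toPolyM_preimage_Un n).subset⟩)
      (fun n _ => ⟨n, trivial, ?_⟩))
  rw [← toPolyM_preimage_Un]
  exact Set.preimage_mono (Un_succ_subset n)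

end Embedding

lemma mk_sum_le_mk_GIS (G : DiGraph.{u}) : Cardinal.mk (G.V ⊕ G.E) ≤ Cardinal.mk (GIS G) := by
  refine Cardinal.mk_le_of_injective (f := Sum.elim
    (fun v => GIS.nz ⟨⟨v, [], trivial⟩, ⟨v, [], trivial⟩, rfl⟩)
    (fun e => GIS.nz ⟨⟨G.s e, [e], rfl, trivial⟩, ⟨G.r e, [], trivial⟩, rfl⟩)) ?_
  rintro (v | e) (w | f) hvw <;>
    obtain ⟨hsrc, hedges⟩ := GPath.ext_iff.mp (NZ.ext_iff.mp (Option.some_injective _ hvw)).1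
  · exact congrArg Sum.inl hsrc
  · exact absurd hedges.symm (List.cons_ne_nil _ _)
  · exact absurd hedges (List.cons_ne_nil _ _)
  · exact congrArg Sum.inr (List.singleton_inj.mp hedges)

end DiGraph

open DiGraph in
/-- For an arbitrary graph `E`, the embedding `F : G(E) → P_λ` (constructed
from injections of vertices and edges into the generators) is a topological
embedding of `(G(E), τ_{𝓕_ω})` into `(P_λ, τ_{𝓕_ω})`, where `λ = |G(E)|`; in
particular `F(Uₙ(0)) = F(G(E)) ∩ V_{n+1}(0)`, where
`Uₙ(0) = {u v⁻¹ ∈ G(E) : min{|u|,|v|} > n} ∪ {0}` and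
`V_{n+1}(0) = {u v⁻¹ ∈ P_λ : min{|u|,|v|} > n+1} ∪ {0}`. -/
theorem gis_topological_embedding_Fomega (G : DiGraph.{u}) :
    ∃ f : GIS G →ₙ* PolyM ((Cardinal.mk (GIS G)).out),
      Function.Injective f ∧ f 0 = 0 ∧
      (∀ n : ℕ, f '' Un G n =
        Set.range f ∩ Un (bouquet ((Cardinal.mk (GIS G)).out)) (n + 1)) ∧
      @Topology.IsEmbedding _ _ (tauF (Fomega G))
        (tauF (Fomega (bouquet ((Cardinal.mk (GIS G)).out)))) f := by
  obtain ⟨ψ⟩ : Nonempty (G.V ⊕ G.E ↪ (Cardinal.mk (GIS G)).out) := by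
    rw [← Cardinal.le_def, Cardinal.mk_out]
    exact mk_sum_le_mk_GIS G
  have hg : Function.Injective (ψ ∘ Sum.inl) := ψ.injective.comp Sum.inl_injective
  have hh : Function.Injective (ψ ∘ Sum.inr) := ψ.injective.comp Sum.inr_injective
  exact ⟨⟨GIS.toPolyM _ _, GIS.toPolyM_mul hg hh⟩, GIS.toPolyM_injective hg hh, rfl,
    GIS.toPolyM_image_Un, GIS.isEmbedding_toPolyM hg hh⟩
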